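/- arXiv:2506.19883 — 2 statements merged into one kernel-verified Lean document; each statement's English description precedes it below -/
import Mathlib

section
/- Let f : ℝ^d → ℝ be differentiable with L-Lipschitz gradient (L > 0). Let x, u, d ∈ ℝ^d satisfy ⟨u, d⟩ ≥ ‖d‖², and let 0 ≤ η ≤ 1/(2L). Then f(x − η·d) ≤ f(x) + (η/2)·‖∇f(x) − u‖² − (η/4)·‖d‖². -/
/-!
Along the segment `t ↦ x + t • v`, the function `f (x + t • v) - t ⟪∇f x, v⟫ - (L/2) t² ‖v‖²`
has nonpositive derivative for `t ≥ 0` by the Lipschitz bound on `∇f`, which gives the descent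
lemma `f (x + v) ≤ f x + ⟪∇f x, v⟫ + (L/2) ‖v‖²`. Take `v = -η d` and split
`⟪∇f x, d⟫ = ⟪∇f x - u, d⟫ + ⟪u, d⟫`: Young's inequality bounds the first term and
`⟪u, d⟫ ≥ ‖d‖²` the second, while `L η ≤ 1/2` absorbs the quadratic term into `-(η/4) ‖d‖²`.
-/

open scoped RealInnerProductSpace

section DescentLemma

variable {E : Type*} [NormedAddCommGroup E] [InnerProductSpace ℝ E] [CompleteSpace E]
  {f : E → ℝ} {L : ℝ}

theorem hasDerivAt_comp_add_smul (hf : Differentiable ℝ f) (x v : E) (t : ℝ) :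
    HasDerivAt (fun s : ℝ => f (x + s • v)) ⟪gradient f (x + t • v), v⟫ t := by
  have hline : HasDerivAt (fun s : ℝ => x + s • v) v t := by
    simpa using ((hasDerivAt_id t).smul_const v).const_add x
  have hgrad := (hasGradientAt_iff_hasFDerivAt.mp (hf (x + t • v)).hasGradientAt)
  simpa [Function.comp_def] using hgrad.comp_hasDerivAt t hline

theorem inner_gradient_add_smul_sub_le
    (hlip : ∀ x y : E, ‖gradient f x - gradient f y‖ ≤ L * ‖x - y‖)
    (x v : E) {t : ℝ} (ht : 0 ≤ t) :
    ⟪gradient f (x + t • v) - gradient f x, v⟫ ≤ L * t * ‖v‖ ^ 2 :=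
  calc ⟪gradient f (x + t • v) - gradient f x, v⟫
      ≤ ‖gradient f (x + t • v) - gradient f x‖ * ‖v‖ := real_inner_le_norm _ _
    _ ≤ L * ‖t • v‖ * ‖v‖ := by
        gcongr
        simpa using hlip (x + t • v) x
    _ = L * t * ‖v‖ ^ 2 := by rw [norm_smul, Real.norm_of_nonneg ht]; ring

theorem le_add_inner_gradient_add_sq_norm (hf : Differentiable ℝ f)
    (hlip : ∀ x y : E, ‖gradient f x - gradient f y‖ ≤ L * ‖x - y‖) (x v : E) :
    f (x + v) ≤ f x + ⟪gradient f x, v⟫ + L / 2 * ‖v‖ ^ 2 := by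
  set φ : ℝ → ℝ := fun t => f (x + t • v) - t * ⟪gradient f x, v⟫ - L / 2 * t ^ 2 * ‖v‖ ^ 2
  have hφ : ∀ t, HasDerivAt φ
      (⟪gradient f (x + t • v), v⟫ - ⟪gradient f x, v⟫ - L * t * ‖v‖ ^ 2) t := by
    intro t
    have := ((hasDerivAt_comp_add_smul hf x v t).sub
      ((hasDerivAt_id t).mul_const ⟪gradient f x, v⟫)).sub
      (((hasDerivAt_pow 2 t).const_mul (L / 2)).mul_const (‖v‖ ^ 2))
    exact this.congr_deriv (by push_cast; ring)
  have hanti : AntitoneOn φ (Set.Ici 0) := by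
    refine antitoneOn_of_hasDerivWithinAt_nonpos (convex_Ici 0)
      (fun t _ => (hφ t).continuousAt.continuousWithinAt)
      (fun t _ => (hφ t).hasDerivWithinAt) fun t ht => ?_
    rw [interior_Ici] at ht
    have hgrowth := inner_gradient_add_smul_sub_le hlip x v ht.le
    rw [inner_sub_left] at hgrowth
    linarith
  have h01 : φ 1 ≤ φ 0 := hanti Set.self_mem_Ici (Set.mem_Ici.mpr zero_le_one) zero_le_one
  simp only [φ, one_smul, zero_smul, add_zero, one_mul, zero_mul, mul_one, sq,
    mul_zero, sub_zero] at h01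
  linarith

end DescentLemma

theorem neg_inner_le_of_sq_norm_le_inner {F : Type*} [NormedAddCommGroup F]
    [InnerProductSpace ℝ F] (g : F) {u d : F} (hud : ‖d‖ ^ 2 ≤ ⟪u, d⟫) :
    -⟪g, d⟫ ≤ (‖g - u‖ ^ 2 - ‖d‖ ^ 2) / 2 := by
  have hexpand := norm_add_sq_real (g - u) d
  rw [inner_sub_left] at hexpand
  linarith [sq_nonneg ‖g - u + d‖]

/-- The paper's Lemma 3 (lem:update2): one-step descent inequality for a multi-gradient step. -/
theorem stimulus_descent_lemma {d : ℕ} (f : EuclideanSpace ℝ (Fin d) → ℝ) (L : ℝ)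
    (hL : 0 < L) (hdiff : Differentiable ℝ f)
    (hlip : ∀ x y : EuclideanSpace ℝ (Fin d), ‖gradient f x - gradient f y‖ ≤ L * ‖x - y‖)
    (x u dvec : EuclideanSpace ℝ (Fin d))
    (hud : ⟪u, dvec⟫ ≥ ‖dvec‖ ^ 2)
    (η : ℝ) (hη0 : 0 ≤ η) (hη : η ≤ 1 / (2 * L)) :
    f (x - η • dvec) ≤
      f x + (η / 2) * ‖gradient f x - u‖ ^ 2 - (η / 4) * ‖dvec‖ ^ 2 := by
  have hstep := le_add_inner_gradient_add_sq_norm hdiff hlip x (-(η • dvec))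
  rw [← sub_eq_add_neg, inner_neg_right, real_inner_smul_right, norm_neg, norm_smul,
    Real.norm_of_nonneg hη0] at hstep
  have hdir := neg_inner_le_of_sq_norm_le_inner (gradient f x) hud
  have hLη : L * η ≤ 1 / 2 := by
    rw [le_div_iff₀ (by positivity)] at hη
    linarith
  have hquad : L / 2 * (η * ‖dvec‖) ^ 2 ≤ η / 4 * ‖dvec‖ ^ 2 := by
    have := mul_le_mul_of_nonneg_right hLη (mul_nonneg hη0 (sq_nonneg ‖dvec‖))
    linarith
  linarith [mul_le_mul_of_nonneg_left hdir hη0]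
end

section
/- Strongly convex one-step contraction. Let S ≥ 1, μ > 0, L > 0, and let f_1, …, f_S : ℝ^d → ℝ each be differentiable with L-Lipschitz gradient and μ-strongly convex. Let 0 < η ≤ min{1/(2μ), 1/(2L)}, let λ ∈ Δ_S, let u_1, …, u_S ∈ ℝ^d, set d := Σ_{s=1}^S λ_s·u_s, let x, x* ∈ ℝ^d and x' := x − η·d, and assume Σ_{s=1}^S λ_s·(f_s(x') − f_s(x*)) ≥ 0. Then ‖x' − x*‖² ≤ (1 − 3μη/4)·‖x − x*‖² + (8η/μ)·Σ_{s=1}^S λ_s·‖∇f_s(x) − u_s‖². -/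
/-!
Average with the weights `λ`: `F = ∑ λₛ fₛ` satisfies the strong convexity inequality with the
field `G = ∑ λₛ ∇fₛ`, which is `L`-Lipschitz, and `d` approximates `G x` with
`‖G x - d‖² ≤ ∑ λₛ ‖∇fₛ x - uₛ‖²` by Jensen. Strong convexity at `x` against `x*` and at `x'`
against `x`, chained through `F x* ≤ F x'`, bound `⟪x - x*, d⟫` from below; inserting this into
`‖x' - x*‖² = ‖x - x*‖² - 2η⟪x - x*, d⟫ + η²‖d‖²` and absorbing the error terms by AM-GM gives the
contraction.
-/

open scoped RealInnerProductSpace BigOperators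

open Finset

variable {E : Type*} [NormedAddCommGroup E] [InnerProductSpace ℝ E]

theorem inexact_gradient_step_arith {μ L η ρ D ε T : ℝ} (hμ : 0 < μ) (hη : 0 < η)
    (hLη : L * η ≤ 1 / 2)
    (hT : η * (D ^ 2 - ε * D - L * η * D ^ 2) + μ / 2 * η ^ 2 * D ^ 2 + μ / 2 * ρ ^ 2 - ε * ρ ≤ T) :
    ρ ^ 2 - 2 * η * T + η ^ 2 * D ^ 2 ≤ (1 - 3 * μ * η / 4) * ρ ^ 2 + 8 * η / μ * ε ^ 2 := by
  have h₀ := mul_le_mul_of_nonneg_left hT (by positivity : 0 ≤ 2 * η)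
  -- AM-GM absorbs the cross terms `ε ρ` and `ε D`; `L η ≤ 1/2` disposes of `-L η² D²`.
  have h₁ : 0 ≤ η / μ * (μ * ρ / 2 - 2 * ε) ^ 2 := by positivity
  have h₂ : 0 ≤ η / μ * (ε - μ * η * D) ^ 2 := by positivity
  have h₃ : 0 ≤ η ^ 2 * D ^ 2 * (1 - 2 * L * η) := mul_nonneg (by positivity) (by linarith)
  have h₄ : 0 ≤ η / μ * ε ^ 2 := by positivity
  linear_combination (norm := field_simp) h₀ + h₁ + h₂ + h₃ + 3 * h₄
  exact le_of_eq (by ring)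

theorem le_inner_sub_of_strong_convexity {μ : ℝ} {F : E → ℝ} {G : E → E}
    (hFG : ∀ x y, F x + ⟪G x, y - x⟫ + μ / 2 * ‖y - x‖ ^ 2 ≤ F y) {x x' z : E} (hz : F z ≤ F x') :
    ⟪G x', x - x'⟫ + μ / 2 * ‖x - x'‖ ^ 2 + μ / 2 * ‖x - z‖ ^ 2 ≤ ⟪G x, x - z⟫ := by
  have h₁ := hFG x z
  have h₂ := hFG x' x
  rw [← neg_sub x z, inner_neg_right, norm_neg] at h₁
  linarith

theorem norm_sub_sq_le_of_inexact_gradient_step {μ L η : ℝ} (hμ : 0 < μ) (hη : 0 < η)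
    (hLη : L * η ≤ 1 / 2) {F : E → ℝ} {G : E → E}
    (hFG : ∀ x y, F x + ⟪G x, y - x⟫ + μ / 2 * ‖y - x‖ ^ 2 ≤ F y)
    (hG : ∀ x y, ‖G x - G y‖ ≤ L * ‖x - y‖) {x z v : E} (hz : F z ≤ F (x - η • v)) :
    ‖x - η • v - z‖ ^ 2 ≤ (1 - 3 * μ * η / 4) * ‖x - z‖ ^ 2 + 8 * η / μ * ‖G x - v‖ ^ 2 := by
  set x' := x - η • v
  have hstep : x - x' = η • v := sub_sub_cancel x _
  have hstep_norm : ‖x - x'‖ = η * ‖v‖ := by rw [hstep, norm_smul, Real.norm_of_nonneg hη.le]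
  have hexpand : ‖x' - z‖ ^ 2 = ‖x - z‖ ^ 2 - 2 * η * ⟪x - z, v⟫ + η ^ 2 * ‖v‖ ^ 2 := by
    rw [sub_right_comm, norm_sub_sq_real, real_inner_smul_right, norm_smul,
      Real.norm_of_nonneg hη.le]
    ring
  have hthree_point := le_inner_sub_of_strong_convexity hFG (x := x) hz
  rw [hstep_norm, hstep, real_inner_smul_right] at hthree_point
  have hshift : ⟪G x, v⟫ - L * η * ‖v‖ ^ 2 ≤ ⟪G x', v⟫ := by
    have hcs : ⟪G x - G x', v⟫ ≤ L * η * ‖v‖ ^ 2 := calc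
      ⟪G x - G x', v⟫ ≤ ‖G x - G x'‖ * ‖v‖ := real_inner_le_norm _ _
      _ ≤ L * ‖x - x'‖ * ‖v‖ := by gcongr; exact hG x x'
      _ = L * η * ‖v‖ ^ 2 := by rw [hstep_norm]; ring
    rw [inner_sub_left] at hcs
    linarith
  have hGv : ‖v‖ ^ 2 - ‖G x - v‖ * ‖v‖ ≤ ⟪G x, v⟫ := by
    have := real_inner_le_norm (v - G x) v
    rw [inner_sub_left, real_inner_self_eq_norm_sq, norm_sub_rev] at this
    linarith
  have hinner : ⟪G x, x - z⟫ - ‖G x - v‖ * ‖x - z‖ ≤ ⟪x - z, v⟫ := by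
    have := real_inner_le_norm (G x - v) (x - z)
    rw [inner_sub_left, real_inner_comm (x - z) v] at this
    linarith
  have hlower : η * (‖v‖ ^ 2 - ‖G x - v‖ * ‖v‖ - L * η * ‖v‖ ^ 2) + μ / 2 * η ^ 2 * ‖v‖ ^ 2
      + μ / 2 * ‖x - z‖ ^ 2 - ‖G x - v‖ * ‖x - z‖ ≤ ⟪x - z, v⟫ := by
    linarith [mul_le_mul_of_nonneg_left hshift hη.le, mul_le_mul_of_nonneg_left hGv hη.le]
  rw [hexpand]
  exact inexact_gradient_step_arith hμ hη hLη hlower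

section ConvexCombination

variable {ι : Type*} {t : Finset ι} {w : ι → ℝ}

theorem norm_sum_smul_sq_le (hw : ∀ i ∈ t, 0 ≤ w i) (hw1 : ∑ i ∈ t, w i = 1) (v : ι → E) :
    ‖∑ i ∈ t, w i • v i‖ ^ 2 ≤ ∑ i ∈ t, w i * ‖v i‖ ^ 2 :=
  (convexOn_univ_norm.pow (fun _ _ => norm_nonneg _) 2).map_sum_le hw hw1 fun _ _ => Set.mem_univ _

theorem norm_sum_smul_sub_sum_smul_le {L : ℝ} (hw : ∀ i ∈ t, 0 ≤ w i) (hw1 : ∑ i ∈ t, w i = 1)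
    {g : ι → E → E} (hg : ∀ i ∈ t, ∀ x y, ‖g i x - g i y‖ ≤ L * ‖x - y‖) (x y : E) :
    ‖∑ i ∈ t, w i • g i x - ∑ i ∈ t, w i • g i y‖ ≤ L * ‖x - y‖ :=
  calc ‖∑ i ∈ t, w i • g i x - ∑ i ∈ t, w i • g i y‖
      = ‖∑ i ∈ t, w i • (g i x - g i y)‖ := by simp only [smul_sub, sum_sub_distrib]
    _ ≤ ∑ i ∈ t, w i * ‖g i x - g i y‖ := by
      refine (norm_sum_le _ _).trans_eq (sum_congr rfl fun i hi => ?_)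
      rw [norm_smul, Real.norm_of_nonneg (hw i hi)]
    _ ≤ ∑ i ∈ t, w i * (L * ‖x - y‖) :=
      sum_le_sum fun i hi => mul_le_mul_of_nonneg_left (hg i hi x y) (hw i hi)
    _ = L * ‖x - y‖ := by rw [← sum_mul, hw1, one_mul]

theorem sum_mul_add_inner_sum_smul_le {μ : ℝ} (hw : ∀ i ∈ t, 0 ≤ w i) (hw1 : ∑ i ∈ t, w i = 1)
    {f : ι → E → ℝ} {g : ι → E → E}
    (hfg : ∀ i ∈ t, ∀ x y, f i x + ⟪g i x, y - x⟫ + μ / 2 * ‖y - x‖ ^ 2 ≤ f i y) (x y : E) :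
    ∑ i ∈ t, w i * f i x + ⟪∑ i ∈ t, w i • g i x, y - x⟫ + μ / 2 * ‖y - x‖ ^ 2
      ≤ ∑ i ∈ t, w i * f i y :=
  calc ∑ i ∈ t, w i * f i x + ⟪∑ i ∈ t, w i • g i x, y - x⟫ + μ / 2 * ‖y - x‖ ^ 2
      = ∑ i ∈ t, w i * (f i x + ⟪g i x, y - x⟫ + μ / 2 * ‖y - x‖ ^ 2) := by
        simp only [mul_add, sum_add_distrib, sum_inner, real_inner_smul_left, ← sum_mul, hw1,
          one_mul]
    _ ≤ ∑ i ∈ t, w i * f i y :=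
      sum_le_sum fun i hi => mul_le_mul_of_nonneg_left (hfg i hi x y) (hw i hi)

end ConvexCombination

theorem stimulus_strongly_convex_contraction_general {d : ℕ} (S : ℕ) (μ L η : ℝ)
    (hμ : 0 < μ) (hL : 0 < L) (hη0 : 0 < η) (hη : η ≤ min (1 / (2 * μ)) (1 / (2 * L)))
    (f : Fin S → EuclideanSpace ℝ (Fin d) → ℝ)
    (hlip : ∀ s, ∀ x y : EuclideanSpace ℝ (Fin d),
      ‖gradient (f s) x - gradient (f s) y‖ ≤ L * ‖x - y‖)
    (hsc : ∀ s, ∀ x y : EuclideanSpace ℝ (Fin d),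
      f s y ≥ f s x + ⟪gradient (f s) x, y - x⟫ + (μ / 2) * ‖y - x‖ ^ 2)
    (lam : Fin S → ℝ) (hlam_nonneg : ∀ s, 0 ≤ lam s) (hlam_sum : ∑ s : Fin S, lam s = 1)
    (u : Fin S → EuclideanSpace ℝ (Fin d))
    (dvec : EuclideanSpace ℝ (Fin d)) (hdvec : dvec = ∑ s : Fin S, lam s • u s)
    (x xstar x' : EuclideanSpace ℝ (Fin d)) (hx' : x' = x - η • dvec)
    (hnonneg : 0 ≤ ∑ s : Fin S, lam s * (f s x' - f s xstar)) :
    ‖x' - xstar‖ ^ 2 ≤ (1 - 3 * μ * η / 4) * ‖x - xstar‖ ^ 2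
      + (8 * η / μ) * ∑ s : Fin S, lam s * ‖gradient (f s) x - u s‖ ^ 2 := by
  have hLη : L * η ≤ 1 / 2 := by
    have h := hη.trans (min_le_right _ _)
    rw [le_div_iff₀ (by positivity)] at h
    linarith
  have hw : ∀ s ∈ univ, 0 ≤ lam s := fun s _ => hlam_nonneg s
  have hF : ∑ s, lam s * f s xstar ≤ ∑ s, lam s * f s x' := by
    simpa only [mul_sub, sum_sub_distrib, sub_nonneg] using hnonneg
  subst hx'
  calc ‖x - η • dvec - xstar‖ ^ 2
      ≤ (1 - 3 * μ * η / 4) * ‖x - xstar‖ ^ 2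
        + 8 * η / μ * ‖∑ s, lam s • gradient (f s) x - dvec‖ ^ 2 :=
        norm_sub_sq_le_of_inexact_gradient_step hμ hη0 hLη
          (sum_mul_add_inner_sum_smul_le hw hlam_sum fun s _ => hsc s)
          (norm_sum_smul_sub_sum_smul_le hw hlam_sum fun s _ => hlip s) hF
    _ ≤ _ := by
      gcongr
      rw [hdvec, ← sum_sub_distrib]
      simp only [← smul_sub]
      exact norm_sum_smul_sq_le hw hlam_sum _

/-- Strongly convex one-step contraction for STIMULUS (intermediate claim in Theorem 2). -/
theorem stimulus_strongly_convex_contraction {d : ℕ} (S : ℕ) (hS : 1 ≤ S) (μ L η : ℝ)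
    (hμ : 0 < μ) (hL : 0 < L) (hη0 : 0 < η) (hη : η ≤ min (1 / (2 * μ)) (1 / (2 * L)))
    (f : Fin S → EuclideanSpace ℝ (Fin d) → ℝ)
    (hdiff : ∀ s, Differentiable ℝ (f s))
    (hlip : ∀ s, ∀ x y : EuclideanSpace ℝ (Fin d),
      ‖gradient (f s) x - gradient (f s) y‖ ≤ L * ‖x - y‖)
    (hsc : ∀ s, ∀ x y : EuclideanSpace ℝ (Fin d),
      f s y ≥ f s x + ⟪gradient (f s) x, y - x⟫ + (μ / 2) * ‖y - x‖ ^ 2)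
    (lam : Fin S → ℝ) (hlam_nonneg : ∀ s, 0 ≤ lam s) (hlam_sum : ∑ s : Fin S, lam s = 1)
    (u : Fin S → EuclideanSpace ℝ (Fin d))
    (dvec : EuclideanSpace ℝ (Fin d)) (hdvec : dvec = ∑ s : Fin S, lam s • u s)
    (x xstar x' : EuclideanSpace ℝ (Fin d)) (hx' : x' = x - η • dvec)
    (hnonneg : 0 ≤ ∑ s : Fin S, lam s * (f s x' - f s xstar)) :
    ‖x' - xstar‖ ^ 2 ≤ (1 - 3 * μ * η / 4) * ‖x - xstar‖ ^ 2
      + (8 * η / μ) * ∑ s : Fin S, lam s * ‖gradient (f s) x - u s‖ ^ 2 :=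
  stimulus_strongly_convex_contraction_general S μ L η hμ hL hη0 hη f hlip hsc lam hlam_nonneg
    hlam_sum u dvec hdvec x xstar x' hx' hnonneg
end
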